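/- arXiv:1307.7441 — 2 statements merged into one kernel-verified Lean document; each statement's English description precedes it below -/
import Mathlib

section
/- Let ε be an Extended Bundle Event Structure and C a configuration of ε. Define e ≺_C e' iff (∃X ⊆ E, X ↦ e' ∧ e ∈ X) ∨ e ⇝ e', and let ⪯_C be the reflexive-transitive closure of ≺_C on C. Then ⪯_C is a partial order on C. -/
/-! Along a trace every precedence step moves forward. If `e ⇝ e'` with `e ≠ e'`, then `e` occurs
before `e'`, since otherwise `e'` would already disable `e`. If `X ↦ e'` with `e ∈ X`, some member
`x` of `X` occurs before `e'`, and either `x = e` or, by stability, `e ⇝ x`, so `e` occurs before `x`.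
Hence the position in the trace is monotone along `⪯_C`, and `⪯_C` is antisymmetric. -/

/-- Enabled events of an Extended Bundle Event Structure after the sequence `σ`. -/
def een {E : Type*} (dis : E → E → Prop) (bund : Set E → E → Prop) (σ : List E) : Set E :=
  {e | e ∉ σ ∧ (∀ X, bund X e → ∃ x ∈ X, x ∈ σ) ∧ ¬ ∃ e' ∈ σ, dis e e'}

/-- `σ` is a trace w.r.t. the enabling function `en`. -/
def IsTrace {E : Type*} (en : List E → Set E) (σ : List E) : Prop :=
  ∀ i : Fin σ.length, σ.get i ∈ en (σ.take i)

/-- The priority condition on a sequence `σ`. -/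
def PrioOK {E : Type*} (en : List E → Set E) (prio : E → E → Prop) (σ : List E) : Prop :=
  ∀ i, i < σ.length → ∀ j h : Fin σ.length,
    σ.get j ≠ σ.get h → σ.get j ∈ en (σ.take i) → σ.get h ∈ en (σ.take i) →
    prio (σ.get h) (σ.get j) → (j : ℕ) < h

/-- Precedence relation of an EBES on a configuration `C`: bundle enabling or disabling. -/
def eprecC {E : Type*} (dis : E → E → Prop) (bund : Set E → E → Prop) (C : Set E)
    (a b : E) : Prop :=
  a ∈ C ∧ b ∈ C ∧ ((∃ X, bund X b ∧ a ∈ X) ∨ dis a b)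

/-- Reflexive-transitive closure of precedence on `C`. -/
def epreC {E : Type*} (dis : E → E → Prop) (bund : Set E → E → Prop) (C : Set E) :
    E → E → Prop :=
  Relation.ReflTransGen (eprecC dis bund C)

namespace IsTrace

variable {E : Type*} [DecidableEq E] {σ : List E} {a b : E}

theorem mem_take_idxOf {en : List E → Set E} (hσ : IsTrace en σ) (ha : a ∈ σ) :
    a ∈ en (σ.take (σ.idxOf a)) := by
  have hlt := List.idxOf_lt_length_of_mem ha
  simpa [List.getElem_idxOf hlt] using hσ ⟨σ.idxOf a, hlt⟩

variable {dis : E → E → Prop} {bund : Set E → E → Prop}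

theorem idxOf_lt_of_dis (hσ : IsTrace (een dis bund) σ) (ha : a ∈ σ) (hb : b ∈ σ)
    (hab : a ≠ b) (hdis : dis a b) : σ.idxOf a < σ.idxOf b := by
  by_contra! hba
  have hb_before : b ∈ σ.take (σ.idxOf a) :=
    (List.mem_take_iff_idxOf_lt hb).2 <|
      hba.lt_of_ne fun h => hab ((List.idxOf_inj ha).1 h.symm)
  exact (hσ.mem_take_idxOf ha).2.2 ⟨b, hb_before, hdis⟩

theorem idxOf_lt_of_mem_bundle
    (hstab : ∀ X e, bund X e → ∀ e1 ∈ X, ∀ e2 ∈ X, e1 ≠ e2 → dis e1 e2)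
    (hσ : IsTrace (een dis bund) σ) (ha : a ∈ σ) (hb : b ∈ σ) {X : Set E} (hX : bund X b)
    (haX : a ∈ X) : σ.idxOf a < σ.idxOf b := by
  obtain ⟨x, hxX, hx_before⟩ := (hσ.mem_take_idxOf hb).2.1 X hX
  have hx := List.mem_of_mem_take hx_before
  have hxb : σ.idxOf x < σ.idxOf b := (List.mem_take_iff_idxOf_lt hx).1 hx_before
  by_cases hax : a = x
  · exact hax ▸ hxb
  · exact (hσ.idxOf_lt_of_dis ha hx hax (hstab X b hX a haX x hxX hax)).trans hxb

theorem idxOf_le_of_eprecC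
    (hstab : ∀ X e, bund X e → ∀ e1 ∈ X, ∀ e2 ∈ X, e1 ≠ e2 → dis e1 e2)
    (hσ : IsTrace (een dis bund) σ) {C : Set E} (hC : ∀ e ∈ C, e ∈ σ)
    (h : eprecC dis bund C a b) : σ.idxOf a ≤ σ.idxOf b := by
  obtain ⟨haC, hbC, ⟨X, hX, haX⟩ | hdis⟩ := h
  · exact (hσ.idxOf_lt_of_mem_bundle hstab (hC a haC) (hC b hbC) hX haX).le
  · rcases eq_or_ne a b with rfl | hab
    · rfl
    · exact (hσ.idxOf_lt_of_dis (hC a haC) (hC b hbC) hab hdis).le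

theorem idxOf_le_of_epreC
    (hstab : ∀ X e, bund X e → ∀ e1 ∈ X, ∀ e2 ∈ X, e1 ≠ e2 → dis e1 e2)
    (hσ : IsTrace (een dis bund) σ) {C : Set E} (hC : ∀ e ∈ C, e ∈ σ)
    (h : epreC dis bund C a b) : σ.idxOf a ≤ σ.idxOf b := by
  have hmono := Relation.ReflTransGen.lift (p := (· ≤ ·)) (σ.idxOf ·)
    (fun _ _ => hσ.idxOf_le_of_eprecC hstab hC) _ _ h
  rwa [Relation.reflTransGen_eq_self] at hmono

end IsTrace

theorem ebes_precedence_partial_order_general {E : Type*} (dis : E → E → Prop)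
    (bund : Set E → E → Prop)
    (hstab : ∀ X e, bund X e → ∀ e1 ∈ X, ∀ e2 ∈ X, e1 ≠ e2 → dis e1 e2)
    (C : Set E) (hC : ∃ σ : List E, IsTrace (een dis bund) σ ∧ {e | e ∈ σ} = C) :
    (∀ e ∈ C, epreC dis bund C e e) ∧
    (∀ e1 e2 e3, epreC dis bund C e1 e2 → epreC dis bund C e2 e3 →
      epreC dis bund C e1 e3) ∧
    (∀ e ∈ C, ∀ e' ∈ C, epreC dis bund C e e' → epreC dis bund C e' e → e = e') := by
  classical
  obtain ⟨σ, hσ, rfl⟩ := hC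
  refine ⟨fun _ _ => .refl, fun _ _ _ => .trans, fun e he e' _ h h' => ?_⟩
  exact (List.idxOf_inj he).1 <| (hσ.idxOf_le_of_epreC hstab (fun _ => id) h).antisymm
    (hσ.idxOf_le_of_epreC hstab (fun _ => id) h')

/-- the reflexive-transitive closure of the precedence relation
(bundle enabling together with disabling) on a configuration of an EBES is a
partial order on that configuration. -/
theorem ebes_precedence_partial_order {E : Type*} (dis : E → E → Prop)
    (bund : Set E → E → Prop)
    (hirr : ∀ e, ¬ dis e e)
    (hstab : ∀ X e, bund X e → ∀ e1 ∈ X, ∀ e2 ∈ X, e1 ≠ e2 → dis e1 e2)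
    (C : Set E) (hC : ∃ σ : List E, IsTrace (een dis bund) σ ∧ {e | e ∈ σ} = C) :
    (∀ e ∈ C, epreC dis bund C e e) ∧
    (∀ e1 e2 e3, epreC dis bund C e1 e2 → epreC dis bund C e2 e3 →
      epreC dis bund C e1 e3) ∧
    (∀ e ∈ C, ∀ e' ∈ C, epreC dis bund C e e' → epreC dis bund C e' e → e = e') :=
  ebes_precedence_partial_order_general dis bund hstab C hC
end

section
/- Let (ε, ◁) be a prioritized Extended Bundle Event Structure, C a configuration of ε with precedence partial order ⪯_C (generated by bundle enabling and disabling), and define ◁' = ◁ ∖ { (e,e') ∈ C × C | e' ⪯_C e }. Then the set of traces of (ε,◁) over C equals the set of traces of (ε,◁') over C. -/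
/-! Every prefix of a trace is downward closed for the precedence order on its configuration:
an event that bundle-enables `b` or is disabled by `b` has already occurred when `b` occurs
(for a bundle, by stability: any other member of the bundle disables it). Hence two distinct
events with `e' ⪯_C e` occur in this order in every trace over `C`, so the priority condition
holds for such pairs regardless of `◁`, and removing them from `◁` changes nothing. -/

namespace List

variable {α : Type*} {l : List α} {m n : ℕ} {x : α}

theorem lt_of_mem_take_of_not_mem_take (hn : x ∈ l.take n) (hm : x ∉ l.take m) : m < n :=
  lt_of_not_ge fun hnm => hm (take_subset_take_left l hnm hn)

theorem get_mem_take_of_lt (i : Fin l.length) (hi : (i : ℕ) < n) : l.get i ∈ l.take n :=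
  mem_take_iff_getElem.2 ⟨i, lt_min hi i.2, rfl⟩

end List

section Trace

variable {E : Type*} {dis : E → E → Prop} {bund : Set E → E → Prop} {σ : List E}

theorem IsTrace.lt_of_get_mem_take (hσ : IsTrace (een dis bund) σ) {j : Fin σ.length} {n : ℕ}
    (hj : σ.get j ∈ σ.take n) : (j : ℕ) < n :=
  List.lt_of_mem_take_of_not_mem_take hj (hσ j).1

theorem IsTrace.mem_take_of_eprecC
    (hstab : ∀ X e, bund X e → ∀ e1 ∈ X, ∀ e2 ∈ X, e1 ≠ e2 → dis e1 e2)
    (hσ : IsTrace (een dis bund) σ) {a b : E} (hab : eprecC dis bund {x | x ∈ σ} a b) {n : ℕ}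
    (hb : b ∈ σ.take n) : a ∈ σ.take n := by
  obtain ⟨ha, -, hcause⟩ := hab
  obtain ⟨m, rfl⟩ := List.mem_iff_get.1 ha
  obtain ⟨k, hk, rfl⟩ := List.mem_take_iff_getElem.1 hb
  obtain ⟨hkn, hk⟩ := lt_min_iff.1 hk
  have ha_en := hσ m
  have hb_en := hσ ⟨k, hk⟩
  refine List.get_mem_take_of_lt m ?_
  rcases hcause with ⟨X, hX, hmX⟩ | hdis
  · obtain ⟨x, hxX, hxk⟩ := hb_en.2.1 X hX
    by_cases hxm : x = σ.get m
    · subst hxm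
      exact hσ.lt_of_get_mem_take (List.take_subset_take_left σ hkn.le hxk)
    · have hx_not : x ∉ σ.take m := fun hx =>
        ha_en.2.2 ⟨x, hx, hstab X _ hX _ hmX x hxX (Ne.symm hxm)⟩
      exact (List.lt_of_mem_take_of_not_mem_take hxk hx_not).trans hkn
  · exact List.lt_of_mem_take_of_not_mem_take hb fun hbm => ha_en.2.2 ⟨_, hbm, hdis⟩

theorem IsTrace.mem_take_of_epreC
    (hstab : ∀ X e, bund X e → ∀ e1 ∈ X, ∀ e2 ∈ X, e1 ≠ e2 → dis e1 e2)
    (hσ : IsTrace (een dis bund) σ) {a b : E} (hab : epreC dis bund {x | x ∈ σ} a b) {n : ℕ}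
    (hb : b ∈ σ.take n) : a ∈ σ.take n := by
  induction hab with
  | refl => exact hb
  | tail _ hstep ih => exact ih (hσ.mem_take_of_eprecC hstab hstep hb)

theorem IsTrace.lt_of_epreC
    (hstab : ∀ X e, bund X e → ∀ e1 ∈ X, ∀ e2 ∈ X, e1 ≠ e2 → dis e1 e2)
    (hσ : IsTrace (een dis bund) σ) {j h : Fin σ.length} (hne : σ.get j ≠ σ.get h)
    (hjh : epreC dis bund {x | x ∈ σ} (σ.get j) (σ.get h)) : (j : ℕ) < h := by
  have hle : (j : ℕ) ≤ h := Nat.lt_succ_iff.1 <| hσ.lt_of_get_mem_take <|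
    hσ.mem_take_of_epreC hstab hjh (List.get_mem_take_of_lt h (Nat.lt_succ_self _))
  exact lt_of_le_of_ne hle fun hjh_eq => hne (congrArg σ.get (Fin.ext hjh_eq))

end Trace

theorem PrioOK.mono {E : Type*} {en : List E → Set E} {prio prio' : E → E → Prop}
    {σ : List E} (hle : ∀ e e', prio' e e' → prio e e') (h : PrioOK en prio σ) :
    PrioOK en prio' σ :=
  fun i hi j k hne hj hk hprio => h i hi j k hne hj hk (hle _ _ hprio)

theorem pebes_priority_ignorance_general {E : Type*} (dis : E → E → Prop)
    (bund : Set E → E → Prop) (prio : E → E → Prop)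
    (hstab : ∀ X e, bund X e → ∀ e1 ∈ X, ∀ e2 ∈ X, e1 ≠ e2 → dis e1 e2)
    (C : Set E) :
    {σ : List E | (IsTrace (een dis bund) σ ∧ PrioOK (een dis bund) prio σ) ∧
        {x | x ∈ σ} = C} =
      {σ : List E | (IsTrace (een dis bund) σ ∧
          PrioOK (een dis bund)
            (fun e e' => prio e e' ∧ ¬ (e ∈ C ∧ e' ∈ C ∧ epreC dis bund C e' e)) σ) ∧
        {x | x ∈ σ} = C} := by
  ext σ
  constructor
  · rintro ⟨⟨hσ, hprio⟩, hC⟩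
    exact ⟨⟨hσ, hprio.mono fun _ _ h => h.1⟩, hC⟩
  · rintro ⟨⟨hσ, hprio⟩, rfl⟩
    refine ⟨⟨hσ, fun i hi j h hne hj hh hjh => ?_⟩, rfl⟩
    by_cases hpre : epreC dis bund {x | x ∈ σ} (σ.get j) (σ.get h)
    · exact hσ.lt_of_epreC hstab hne hpre
    · exact hprio i hi j h hne hj hh ⟨hjh, fun hrem => hpre hrem.2.2⟩

/-- with respect to a configuration `C` of an EBES, priority pairs
`(e, e')` with `e' ⪯_C e` can be ignored without changing the traces over `C`. -/
theorem pebes_priority_ignorance {E : Type*} (dis : E → E → Prop)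
    (bund : Set E → E → Prop) (prio : E → E → Prop)
    (hirr : ∀ e, ¬ dis e e)
    (hstab : ∀ X e, bund X e → ∀ e1 ∈ X, ∀ e2 ∈ X, e1 ≠ e2 → dis e1 e2)
    (hacyc : ∀ e, ¬ Relation.TransGen prio e e)
    (C : Set E) (hC : ∃ σ : List E, IsTrace (een dis bund) σ ∧ {e | e ∈ σ} = C) :
    {σ : List E | (IsTrace (een dis bund) σ ∧ PrioOK (een dis bund) prio σ) ∧
        {x | x ∈ σ} = C} =
      {σ : List E | (IsTrace (een dis bund) σ ∧
          PrioOK (een dis bund)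
            (fun e e' => prio e e' ∧ ¬ (e ∈ C ∧ e' ∈ C ∧ epreC dis bund C e' e)) σ) ∧
        {x | x ∈ σ} = C} :=
  pebes_priority_ignorance_general dis bund prio hstab C
end
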